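/- Let E be a symmetric Banach function space on I=[0,α) with the Fatou property and let φ be the fundamental function of E. If x∈E is an LLUKM point and x*(t)φ(t)→0 as t→0⁺, then x is a point of order continuity. -/

import Mathlib

open MeasureTheory Filter Topology Set
open scoped ENNReal

noncomputable section

/-- Lebesgue measure restricted to the interval `I = [0, α)`, where `α : ℝ≥0∞`. -/
def muI (α : ℝ≥0∞) : Measure ℝ :=
  volume.restrict {s : ℝ | 0 ≤ s ∧ ENNReal.ofReal s < α}

/-- The distribution function `d_x(λ) = μ{s ∈ I : |x(s)| > λ}`. -/
def distr (α : ℝ≥0∞) (x : ℝ → ℝ) (lam : ℝ) : ℝ≥0∞ :=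
  muI α {s : ℝ | lam < |x s|}

/-- The decreasing rearrangement `x*(t) = inf{λ > 0 : d_x(λ) ≤ t}`. -/
def rearr (α : ℝ≥0∞) (x : ℝ → ℝ) (t : ℝ) : ℝ :=
  sInf {lam : ℝ | 0 < lam ∧ distr α x lam ≤ ENNReal.ofReal t}

/-- The maximal function `x**(t) = (1/t) ∫₀ᵗ x*(s) ds`. -/
def maxf (α : ℝ≥0∞) (x : ℝ → ℝ) (t : ℝ) : ℝ :=
  (∫ s in Set.Ioc (0 : ℝ) t, rearr α x s) / t

/-- The Hardy–Littlewood–Pólya relation `x ≺ y`, i.e. `x**(t) ≤ y**(t)` for all `t > 0`. -/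
def HLP (α : ℝ≥0∞) (x y : ℝ → ℝ) : Prop :=
  ∀ t : ℝ, 0 < t → maxf α x t ≤ maxf α y t

/-- `x*(∞) = 0`: automatic when `α ≠ ∞`, and `lim_{t→∞} x*(t) = 0` when `α = ∞`. -/
def rearrInftyZero (α : ℝ≥0∞) (x : ℝ → ℝ) : Prop :=
  α = ∞ → Tendsto (rearr α x) atTop (𝓝 0)

/-- A symmetric Banach function space on `[0, α)` with the Fatou property. -/
structure SymmetricBFS (α : ℝ≥0∞) where
  /-- membership in the space `E` -/
  Mem : (ℝ → ℝ) → Prop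
  /-- the norm of `E` -/
  N : (ℝ → ℝ) → ℝ
  mem_aemeasurable : ∀ ⦃x⦄, Mem x → AEMeasurable x (muI α)
  zero_mem : Mem 0
  add_mem : ∀ ⦃x y⦄, Mem x → Mem y → Mem (x + y)
  smul_mem : ∀ (c : ℝ) ⦃x⦄, Mem x → Mem (c • x)
  norm_nonneg' : ∀ x, 0 ≤ N x
  norm_zero' : N 0 = 0
  norm_add_le : ∀ x y, N (x + y) ≤ N x + N y
  norm_smul' : ∀ (c : ℝ) (x : ℝ → ℝ), N (c • x) = |c| * N x
  norm_eq_zero_iff : ∀ ⦃x⦄, Mem x → (N x = 0 ↔ (∀ᵐ s ∂(muI α), x s = 0))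
  /-- the ideal (Banach function space) property -/
  ideal : ∀ ⦃x y⦄, AEMeasurable x (muI α) → Mem y →
    (∀ᵐ s ∂(muI α), |x s| ≤ |y s|) → Mem x ∧ N x ≤ N y
  /-- there is a strictly positive element -/
  exists_strictPos : ∃ x, Mem x ∧ ∀ᵐ s ∂(muI α), 0 < x s
  /-- norm completeness -/
  complete : ∀ u : ℕ → ℝ → ℝ, (∀ n, Mem (u n)) →
    (∀ ε : ℝ, 0 < ε → ∃ n₀ : ℕ, ∀ m n, n₀ ≤ m → n₀ ≤ n → N (u m - u n) < ε) →
    ∃ x, Mem x ∧ Tendsto (fun n => N (u n - x)) atTop (𝓝 0)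
  /-- symmetry: equimeasurable functions have equal norms -/
  symmetric : ∀ ⦃x y⦄, AEMeasurable x (muI α) → Mem y →
    distr α x = distr α y → Mem x ∧ N x = N y
  /-- the Fatou property -/
  fatou : ∀ (u : ℕ → ℝ → ℝ) (x : ℝ → ℝ), (∀ n, Mem (u n)) →
    AEMeasurable x (muI α) →
    (∀ n, ∀ᵐ s ∂(muI α), 0 ≤ u n s) →
    (∀ n, ∀ᵐ s ∂(muI α), u n s ≤ u (n + 1) s) →
    (∀ᵐ s ∂(muI α), Tendsto (fun n => u n s) atTop (𝓝 (x s))) →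
    (∃ C : ℝ, ∀ n, N (u n) ≤ C) →
    Mem x ∧ Tendsto (fun n => N (u n)) atTop (𝓝 (N x))

variable {α : ℝ≥0∞}

/-- The fundamental function `φ(t) = ‖χ_{(0,t)}‖_E`. -/
def SymmetricBFS.fund (E : SymmetricBFS α) (t : ℝ) : ℝ :=
  E.N (Set.indicator (Set.Ioo 0 t) fun _ => (1 : ℝ))

/-- `x` is a point of lower local uniform `K`-monotonicity (`LLUKM` point). -/
def SymmetricBFS.IsLLUKMPoint (E : SymmetricBFS α) (x : ℝ → ℝ) : Prop :=
  ∀ u : ℕ → ℝ → ℝ, (∀ n, E.Mem (u n)) → (∀ n, HLP α (u n) x) →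
    Tendsto (fun n => E.N (u n)) atTop (𝓝 (E.N x)) →
    Tendsto (fun n => E.N (rearr α (u n) - rearr α x)) atTop (𝓝 0)

/-- `x` is a point of upper local uniform `K`-monotonicity (`ULUKM` point). -/
def SymmetricBFS.IsULUKMPoint (E : SymmetricBFS α) (x : ℝ → ℝ) : Prop :=
  ∀ u : ℕ → ℝ → ℝ, (∀ n, E.Mem (u n)) → (∀ n, HLP α x (u n)) →
    Tendsto (fun n => E.N (u n)) atTop (𝓝 (E.N x)) →
    Tendsto (fun n => E.N (rearr α x - rearr α (u n))) atTop (𝓝 0)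

/-- `x` is a point of lower `K`-monotonicity (`LKM` point). -/
def SymmetricBFS.IsLKMPoint (E : SymmetricBFS α) (x : ℝ → ℝ) : Prop :=
  ∀ y : ℝ → ℝ, E.Mem y → HLP α y x → rearr α y ≠ rearr α x → E.N y < E.N x

/-- `x` is a point of order continuity. -/
def SymmetricBFS.IsOCPoint (E : SymmetricBFS α) (x : ℝ → ℝ) : Prop :=
  ∀ u : ℕ → ℝ → ℝ, (∀ n, E.Mem (u n)) →
    (∀ n, ∀ᵐ s ∂(muI α), 0 ≤ u n s ∧ u n s ≤ |x s|) →
    (∀ᵐ s ∂(muI α), Tendsto (fun n => u n s) atTop (𝓝 0)) →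
    Tendsto (fun n => E.N (u n)) atTop (𝓝 0)

/-- `x` is a point of `K`-order continuity. -/
def SymmetricBFS.IsKOCPoint (E : SymmetricBFS α) (x : ℝ → ℝ) : Prop :=
  ∀ u : ℕ → ℝ → ℝ, (∀ n, E.Mem (u n)) → (∀ n, HLP α (u n) x) →
    (∀ᵐ s ∂(muI α), Tendsto (fun n => rearr α (u n) s) atTop (𝓝 0)) →
    Tendsto (fun n => E.N (u n)) atTop (𝓝 0)

/-- `x` is an `H_g` point (Kadec–Klee point for global convergence in measure). -/
def SymmetricBFS.IsHgPoint (E : SymmetricBFS α) (x : ℝ → ℝ) : Prop :=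
  ∀ u : ℕ → ℝ → ℝ, (∀ n, E.Mem (u n)) →
    TendstoInMeasure (muI α) u atTop x →
    Tendsto (fun n => E.N (u n)) atTop (𝓝 (E.N x)) →
    Tendsto (fun n => E.N (u n - x)) atTop (𝓝 0)

/-- `x` is an `H_l` point (Kadec–Klee point for local convergence in measure). -/
def SymmetricBFS.IsHlPoint (E : SymmetricBFS α) (x : ℝ → ℝ) : Prop :=
  ∀ u : ℕ → ℝ → ℝ, (∀ n, E.Mem (u n)) →
    (∀ A : Set ℝ, muI α A < ∞ → TendstoInMeasure ((muI α).restrict A) u atTop x) →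
    Tendsto (fun n => E.N (u n)) atTop (𝓝 (E.N x)) →
    Tendsto (fun n => E.N (u n - x)) atTop (𝓝 0)

/-- A nonnegative `x` is an `LLUM` point (point of lower local uniform monotonicity). -/
def SymmetricBFS.IsLLUMPoint (E : SymmetricBFS α) (x : ℝ → ℝ) : Prop :=
  ∀ u : ℕ → ℝ → ℝ, (∀ n, E.Mem (u n)) →
    (∀ n, ∀ᵐ s ∂(muI α), 0 ≤ u n s ∧ u n s ≤ x s) →
    Tendsto (fun n => E.N (u n)) atTop (𝓝 (E.N x)) →
    Tendsto (fun n => E.N (u n - x)) atTop (𝓝 0)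

/-- A nonnegative `x` is a `ULUM` point (point of upper local uniform monotonicity). -/
def SymmetricBFS.IsULUMPoint (E : SymmetricBFS α) (x : ℝ → ℝ) : Prop :=
  ∀ u : ℕ → ℝ → ℝ, (∀ n, E.Mem (u n)) →
    (∀ n, ∀ᵐ s ∂(muI α), x s ≤ u n s) →
    Tendsto (fun n => E.N (u n)) atTop (𝓝 (E.N x)) →
    Tendsto (fun n => E.N (u n - x)) atTop (𝓝 0)

/-!
Test the LLUKM property on monotone approximations `M_k ↑ x*` by functions decreasing on
`(0, ∞)`: after mixing in a vanishing multiple of `x*` they satisfy `M_k ≺ x`, they are their own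
rearrangements, and the Fatou property gives `‖M_k‖ → ‖x‖`; hence `‖x* - M_k‖ → 0`. Three such
approximations give `‖x* - min(x*, x*(a))‖ → 0` and `‖min(x*, η)‖ → 0` as `a, η → 0⁺`, and
`d_x(η) < ∞` for `η > 0`.

Now let `0 ≤ u_n ≤ |x|` with `u_n → 0` a.e., and split `u_n = min(u_n, η) + (u_n - η)⁺`. The first
part has norm at most `‖min(x*, η)‖`. Since `d_x(η) < ∞`, `u_n → 0` in measure on `{|x| > η}`, so
the second part is eventually supported on a set of measure at most `a`; its rearrangement then
lies below `(x* - min(x*, x*(a))) + x*(a) χ_(0,a)`, of norm at most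
`‖x* - min(x*, x*(a))‖ + x*(a) φ(a)`, which is small by the hypothesis on `φ`.
-/

section

variable {α : ℝ≥0∞}

lemma measurableSet_setOf_ofReal_lt (d : ℝ≥0∞) :
    MeasurableSet {s : ℝ | 0 ≤ s ∧ ENNReal.ofReal s < d} :=
  measurableSet_Ici.inter (ENNReal.measurable_ofReal measurableSet_Iio)

lemma volume_setOf_ofReal_lt (d : ℝ≥0∞) :
    volume {s : ℝ | 0 ≤ s ∧ ENNReal.ofReal s < d} = d := by
  rcases eq_or_ne d ∞ with rfl | hd
  · exact (congrArg volume (by ext; simp)).trans (Real.volume_Ici (a := (0 : ℝ)))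
  · have : {s : ℝ | 0 ≤ s ∧ ENNReal.ofReal s < d} = Ico 0 d.toReal := by
      ext s
      simp only [mem_ofPred_eq, mem_Ico, and_congr_right_iff]
      exact fun hs => ENNReal.ofReal_lt_iff_lt_toReal hs hd
    rw [this, Real.volume_Ico, sub_zero, ENNReal.ofReal_toReal hd]

lemma muI_apply (A : Set ℝ) :
    muI α A = volume (A ∩ {s : ℝ | 0 ≤ s ∧ ENNReal.ofReal s < α}) :=
  Measure.restrict_apply' (measurableSet_setOf_ofReal_lt α)

lemma muI_univ : muI α univ = α := by
  rw [muI_apply, univ_inter, volume_setOf_ofReal_lt]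

lemma ae_muI_pos : ∀ᵐ t ∂(muI α), 0 < t := by
  rw [ae_iff, muI_apply]
  refine measure_mono_null (fun s ⟨hs, hs0, _⟩ => ?_) (measure_singleton (0 : ℝ))
  exact le_antisymm (not_lt.mp hs) hs0

lemma muI_setOf_pos_ofReal_lt {d : ℝ≥0∞} (hd : d ≤ α) :
    muI α {t : ℝ | 0 < t ∧ ENNReal.ofReal t < d} = d := by
  have hpos : {t : ℝ | 0 < t ∧ ENNReal.ofReal t < d} =ᵐ[volume]
      {t : ℝ | 0 ≤ t ∧ ENNReal.ofReal t < d} :=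
    (Ioi_ae_eq_Ici (a := (0 : ℝ))).inter (ae_eq_refl {t : ℝ | ENNReal.ofReal t < d})
  have hsub : {t : ℝ | 0 < t ∧ ENNReal.ofReal t < d} ⊆ {s | 0 ≤ s ∧ ENNReal.ofReal s < α} :=
    fun t ht => ⟨ht.1.le, ht.2.trans_le hd⟩
  rw [muI_apply, inter_eq_left.mpr hsub, measure_congr hpos, volume_setOf_ofReal_lt]

lemma muI_Ioo {r : ℝ} (hr : ENNReal.ofReal r ≤ α) : muI α (Ioo 0 r) = ENNReal.ofReal r := by
  have hsub : Ioo 0 r ⊆ {s : ℝ | 0 ≤ s ∧ ENNReal.ofReal s < α} := fun s hs =>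
    ⟨hs.1.le, ((ENNReal.ofReal_lt_ofReal_iff (hs.1.trans hs.2)).mpr hs.2).trans_le hr⟩
  rw [muI_apply, inter_eq_left.mpr hsub, Real.volume_Ioo, sub_zero]

lemma muI_Ici_of_eq_top (h : α = ∞) (c : ℝ) : muI α (Ici c) = ∞ := by
  subst h
  rw [muI_apply, eq_top_iff]
  exact (Real.volume_Ici (a := max c 0)).ge.trans (measure_mono fun s (hs : max c 0 ≤ s) =>
    ⟨le_of_max_le_left hs, le_of_max_le_right hs, ENNReal.ofReal_lt_top⟩)

end

section

variable {α : ℝ≥0∞} {x y : ℝ → ℝ} {lam t : ℝ}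

lemma distr_le_muI_univ (x : ℝ → ℝ) (lam : ℝ) : distr α x lam ≤ α :=
  (measure_mono (subset_univ _)).trans_eq muI_univ

lemma distr_of_neg (x : ℝ → ℝ) (h : lam < 0) : distr α x lam = α :=
  (congrArg (muI α) (eq_univ_of_forall fun s => h.trans_le (abs_nonneg (x s)))).trans
    muI_univ

lemma distr_antitone (x : ℝ → ℝ) : Antitone (distr α x) :=
  fun _ _ hab => measure_mono fun _ hs => hab.trans_lt hs

lemma distr_mono_of_ae_abs_le (h : ∀ᵐ s ∂(muI α), |x s| ≤ |y s|) (lam : ℝ) :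
    distr α x lam ≤ distr α y lam :=
  measure_mono_ae <| h.mono fun _ hs hlt => hlt.trans_le hs

lemma distr_abs (x : ℝ → ℝ) : distr α (fun s => |x s|) = distr α x := by
  funext lam
  simp only [distr, abs_abs]

lemma distr_smul {c : ℝ} (hc : 0 < c) (x : ℝ → ℝ) (lam : ℝ) :
    distr α (c • x) lam = distr α x (lam / c) := by
  simp only [distr, Pi.smul_apply, smul_eq_mul, abs_mul, abs_of_pos hc, div_lt_iff₀' hc]

lemma distr_le_of_forall_gt {c : ℝ≥0∞} (h : ∀ mu, lam < mu → distr α x mu ≤ c) :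
    distr α x lam ≤ c := by
  have hunion : {s : ℝ | lam < |x s|} = ⋃ n : ℕ, {s : ℝ | lam + 1 / (n + 1) < |x s|} := by
    ext s
    simp only [mem_ofPred_eq, mem_iUnion]
    constructor
    · intro hs
      obtain ⟨n, hn⟩ := exists_nat_one_div_lt (sub_pos.mpr hs)
      exact ⟨n, by linarith⟩
    · rintro ⟨n, hn⟩
      linarith [Nat.one_div_pos_of_nat (α := ℝ) (n := n)]
  have hmono : Monotone fun n : ℕ => {s : ℝ | lam + 1 / (n + 1) < |x s|} := fun m n hmn s hs =>
    lt_of_le_of_lt (add_le_add_right (Nat.one_div_le_one_div hmn) lam) hs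
  rw [distr, hunion, hmono.measure_iUnion]
  exact iSup_le fun n => h _ (lt_add_of_pos_right _ Nat.one_div_pos_of_nat)

lemma distr_indicator_const {S T : Set ℝ} (hST : muI α S = muI α T) (c : ℝ) :
    distr α (S.indicator fun _ => c) = distr α (T.indicator fun _ => c) := by
  have hset : ∀ U : Set ℝ, ∀ lam, 0 ≤ lam →
      {s | lam < |U.indicator (fun _ => c) s|} = {s | s ∈ U ∧ lam < |c|} := by
    intro U lam hlam
    ext s
    by_cases hs : s ∈ U <;> simp [hs, hlam]
  funext lam
  rcases lt_or_ge lam 0 with hlam | hlam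
  · rw [distr_of_neg _ hlam, distr_of_neg _ hlam]
  · by_cases hc : lam < |c|
    · simpa [distr, hset _ _ hlam, hc] using hST
    · simp [distr, hset _ _ hlam, hc]

lemma distr_min_const {f : ℝ → ℝ} (hf : ∀ s, 0 ≤ f s) {η : ℝ} (hη : 0 ≤ η) (lam : ℝ) :
    distr α (fun s => min (f s) η) lam = if lam < η then distr α f lam else 0 := by
  have hset : {s | lam < |min (f s) η|} = {s | lam < |f s|} ∩ {_s | lam < η} := by
    ext s
    simp only [mem_ofPred_eq, mem_inter_iff, abs_of_nonneg (le_min (hf s) hη),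
      abs_of_nonneg (hf s), lt_min_iff]
  by_cases h : lam < η <;> simp [distr, hset, h]

lemma distr_min_congr {f g : ℝ → ℝ} (hf : ∀ s, 0 ≤ f s) (hg : ∀ s, 0 ≤ g s)
    (hfg : distr α f = distr α g) {η : ℝ} (hη : 0 ≤ η) :
    distr α (fun s => min (f s) η) = distr α (fun s => min (g s) η) := by
  funext lam
  rw [distr_min_const hf hη, distr_min_const hg hη, hfg]

end

section

open scoped Pointwise

variable {α : ℝ≥0∞} {x y : ℝ → ℝ} {lam t : ℝ}

def rearrSet (α : ℝ≥0∞) (x : ℝ → ℝ) (t : ℝ) : Set ℝ :=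
  {lam : ℝ | 0 < lam ∧ distr α x lam ≤ ENNReal.ofReal t}

/-- `x*(t) < ∞` for `t > 0`; otherwise `rearr` takes the junk value `sInf ∅ = 0` instead of `∞`. -/
def RearrFinite (α : ℝ≥0∞) (x : ℝ → ℝ) : Prop :=
  ∀ t : ℝ, 0 < t → (rearrSet α x t).Nonempty

lemma tendsto_distr_atTop (hx : AEMeasurable x (muI α)) (h : ∃ lam, distr α x lam ≠ ∞) :
    Tendsto (distr α x) atTop (𝓝 0) := by
  have hempty : (⋂ lam : ℝ, {s | lam < |x s|}) = ∅ :=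
    eq_empty_of_forall_notMem fun s hs => lt_irrefl |x s| (mem_iInter.mp hs |x s|)
  show Tendsto (fun lam => muI α {s | lam < |x s|}) atTop (𝓝 0)
  simpa [Function.comp_def, hempty] using tendsto_measure_iInter_atTop (μ := muI α)
    (fun lam => nullMeasurableSet_lt aemeasurable_const hx.abs)
    (fun a b hab s hs => hab.trans_lt hs) h

lemma rearrFinite_of_tendsto (h : Tendsto (distr α x) atTop (𝓝 0)) : RearrFinite α x :=
  fun _ ht => ((h.eventually (gt_mem_nhds (ENNReal.ofReal_pos.mpr ht))).and
    (eventually_gt_atTop 0)).exists.imp fun _ hlam => ⟨hlam.2, hlam.1.le⟩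

lemma rearr_eq_sInf (x : ℝ → ℝ) (t : ℝ) : rearr α x t = sInf (rearrSet α x t) := rfl

lemma rearr_nonneg (x : ℝ → ℝ) (t : ℝ) : 0 ≤ rearr α x t :=
  Real.sInf_nonneg fun _ h => h.1.le

lemma rearr_le_of_distr_le (hlam : 0 ≤ lam) (h : distr α x lam ≤ ENNReal.ofReal t) :
    rearr α x t ≤ lam := by
  rcases hlam.eq_or_lt with rfl | hlam
  · have : rearrSet α x t = Ioi 0 :=
      Subset.antisymm (fun mu hmu => hmu.1)
        fun mu hmu => ⟨hmu, (distr_antitone x (le_of_lt hmu)).trans h⟩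
    rw [rearr_eq_sInf, this, csInf_Ioi]
  · exact csInf_le ⟨0, fun _ h => h.1.le⟩ ⟨hlam, h⟩

lemma distr_le_of_rearr_le (hx : RearrFinite α x) (ht : 0 < t) (h : rearr α x t ≤ lam) :
    distr α x lam ≤ ENNReal.ofReal t := by
  refine distr_le_of_forall_gt fun mu hmu => ?_
  obtain ⟨nu, hnu, hnumu⟩ := exists_lt_of_csInf_lt (hx t ht) (h.trans_lt hmu)
  exact (distr_antitone x hnumu.le).trans hnu.2

lemma lt_rearr_iff (hx : RearrFinite α x) (ht : 0 < t) (hlam : 0 ≤ lam) :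
    lam < rearr α x t ↔ ENNReal.ofReal t < distr α x lam := by
  rw [← not_le, ← not_le]
  exact not_congr ⟨distr_le_of_rearr_le hx ht, rearr_le_of_distr_le hlam⟩

lemma le_rearr_of_distr_eq_top (hx : RearrFinite α x) (hinf : distr α x lam = ∞) (ht : 0 < t) :
    lam ≤ rearr α x t :=
  le_csInf (hx t ht) fun _ hmu => le_of_not_gt fun hlt => ENNReal.ofReal_ne_top
    (top_unique (hinf.symm.le.trans ((distr_antitone x hlt.le).trans hmu.2)))

lemma rearr_antitoneOn (hx : RearrFinite α x) : AntitoneOn (rearr α x) (Ioi 0) :=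
  fun _ ha _ _ hab => csInf_le_csInf ⟨0, fun _ h => h.1.le⟩ (hx _ ha)
    fun _ hl => ⟨hl.1, hl.2.trans (ENNReal.ofReal_le_ofReal hab)⟩

lemma rearr_le_rearr_of_distr_le (h : ∀ lam, 0 < lam → distr α x lam ≤ distr α y lam)
    (hy : RearrFinite α y) (ht : 0 < t) : rearr α x t ≤ rearr α y t :=
  csInf_le_csInf ⟨0, fun _ h => h.1.le⟩ (hy t ht) fun lam hl => ⟨hl.1, (h lam hl.1).trans hl.2⟩

lemma rearr_congr (h : distr α x = distr α y) : rearr α x = rearr α y := by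
  funext t
  simp only [rearr, h]

lemma rearr_smul {c : ℝ} (hc : 0 < c) (x : ℝ → ℝ) (t : ℝ) :
    rearr α (c • x) t = c * rearr α x t := by
  have hset : rearrSet α (c • x) t = c • rearrSet α x t := by
    ext lam
    simp only [rearrSet, mem_ofPred_eq, mem_smul_set, smul_eq_mul, distr_smul hc]
    constructor
    · rintro ⟨hpos, hle⟩
      exact ⟨lam / c, ⟨div_pos hpos hc, hle⟩, mul_div_cancel₀ lam hc.ne'⟩
    · rintro ⟨mu, ⟨hpos, hle⟩, rfl⟩
      exact ⟨mul_pos hc hpos, by rwa [mul_div_cancel_left₀ mu hc.ne']⟩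
  rw [rearr_eq_sInf, hset, Real.sInf_smul_of_nonneg hc.le, smul_eq_mul, rearr_eq_sInf]

lemma rearr_of_nonpos (x : ℝ → ℝ) (ht : t ≤ 0) : rearr α x t = rearr α x 0 := by
  simp only [rearr, ENNReal.ofReal_of_nonpos ht, ENNReal.ofReal_zero]

lemma measurable_rearr (hx : RearrFinite α x) : Measurable (rearr α x) := by
  refine measurable_of_restrict_of_restrict_compl (measurableSet_Ioi (a := 0)) ?_ ?_
  · exact Antitone.measurable fun a b hab => rearr_antitoneOn hx a.2 b.2 hab
  · have : (Ioi (0 : ℝ))ᶜ.domRestrict (rearr α x) = fun _ => rearr α x 0 := by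
      funext t
      exact rearr_of_nonpos x (not_lt.mp t.2)
    rw [this]
    exact measurable_const

lemma distr_rearr (hx : RearrFinite α x) : distr α (rearr α x) = distr α x := by
  funext lam
  rcases lt_or_ge lam 0 with hlam | hlam
  · rw [distr_of_neg _ hlam, distr_of_neg _ hlam]
  · have hae : {t : ℝ | lam < |rearr α x t|} =ᵐ[muI α]
        {t : ℝ | 0 < t ∧ ENNReal.ofReal t < distr α x lam} := by
      filter_upwards [ae_muI_pos] with t ht
      change (lam < |rearr α x t|) = (0 < t ∧ ENNReal.ofReal t < distr α x lam)
      rw [abs_of_nonneg (rearr_nonneg x t), lt_rearr_iff hx ht hlam, eq_iff_iff, and_iff_right ht]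
    rw [distr, measure_congr hae, muI_setOf_pos_ofReal_lt (distr_le_muI_univ x lam)]

lemma rearr_rearr (hx : RearrFinite α x) : rearr α (rearr α x) = rearr α x :=
  rearr_congr (distr_rearr hx)

end

section

variable {α : ℝ≥0∞} {f : ℝ → ℝ} {t : ℝ}

lemma rearr_le_of_antitoneOn (hf0 : ∀ s, 0 ≤ f s) (hf : AntitoneOn f (Ioi 0)) (ht : 0 < t) :
    rearr α f t ≤ f t := by
  refine rearr_le_of_distr_le (hf0 t) ?_
  have hsub : {s | f t < |f s|} ∩ {s : ℝ | 0 ≤ s ∧ ENNReal.ofReal s < α} ⊆ Ico 0 t := by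
    rintro s ⟨hs, hs0, -⟩
    refine ⟨hs0, lt_of_not_ge fun hts => ?_⟩
    rw [mem_ofPred_eq, abs_of_nonneg (hf0 s)] at hs
    exact hs.not_ge (hf ht (ht.trans_le hts) hts)
  calc distr α f (f t) ≤ volume (Ico 0 t) := by rw [distr, muI_apply]; exact measure_mono hsub
    _ = ENNReal.ofReal t := by rw [Real.volume_Ico, sub_zero]

lemma le_rearr_of_antitoneOn (hfin : RearrFinite α f) (hf0 : ∀ s, 0 ≤ f s)
    (hf : AntitoneOn f (Ioi 0)) (ht : 0 < t) {t' : ℝ} (htt' : t < t')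
    (ht' : ENNReal.ofReal t' ≤ α) : f t' ≤ rearr α f t := by
  by_contra! hlt
  have hsub : Ioo 0 t' ⊆ {s | rearr α f t < |f s|} := fun s hs => by
    rw [mem_ofPred_eq, abs_of_nonneg (hf0 s)]
    exact hlt.trans_le (hf hs.1 (hs.1.trans hs.2) hs.2.le)
  have := calc ENNReal.ofReal t' = muI α (Ioo 0 t') := (muI_Ioo ht').symm
    _ ≤ distr α f (rearr α f t) := measure_mono hsub
    _ ≤ ENNReal.ofReal t := distr_le_of_rearr_le hfin ht le_rfl
  exact (ENNReal.ofReal_lt_ofReal_iff (ht.trans htt')).mpr htt' |>.not_ge this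

/-- Equality can only fail at the countably many jumps of `f`. -/
lemma rearr_ae_eq_of_antitoneOn (hfin : RearrFinite α f) (hf0 : ∀ s, 0 ≤ f s)
    (hf : AntitoneOn f (Ioi 0)) : rearr α f =ᵐ[muI α] f := by
  have hjumps : muI α {t ∈ Ioi 0 | ¬ContinuousWithinAt f (Ioi 0) t} = 0 :=
    hf.countable_not_continuousWithinAt.measure_zero (volume.restrict _)
  filter_upwards [ae_restrict_mem (measurableSet_setOf_ofReal_lt α), ae_muI_pos,
    measure_eq_zero_iff_ae_notMem.mp hjumps] with t htI ht hcont
  have hcont : ContinuousAt f t :=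
    (not_not.mp fun h => hcont ⟨ht, h⟩).continuousAt (Ioi_mem_nhds ht)
  obtain ⟨r, -, htr, hrα⟩ := ENNReal.lt_iff_exists_real_btwn.mp htI.2
  have htr : t < r := (ENNReal.ofReal_lt_ofReal_iff_of_nonneg ht.le).mp htr
  refine le_antisymm (rearr_le_of_antitoneOn hf0 hf ht) ?_
  refine le_of_tendsto (hcont.tendsto.mono_left (nhdsWithin_le_nhds (s := Ioi t))) ?_
  filter_upwards [Ioo_mem_nhdsGT htr] with t' ht'
  exact le_rearr_of_antitoneOn hfin hf0 hf ht ht'.1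
    ((ENNReal.ofReal_le_ofReal ht'.2.le).trans hrα.le)

end

namespace SymmetricBFS

variable {α : ℝ≥0∞} (E : SymmetricBFS α) {f g x : ℝ → ℝ}

lemma mem_neg (hf : E.Mem f) : E.Mem (-f) := by
  simpa using E.smul_mem (-1) hf

lemma norm_neg (f : ℝ → ℝ) : E.N (-f) = E.N f := by
  simpa using E.norm_smul' (-1) f

lemma mem_sub (hf : E.Mem f) (hg : E.Mem g) : E.Mem (f - g) := by
  simpa [sub_eq_add_neg] using E.add_mem hf (E.mem_neg hg)

lemma norm_sub_comm (f g : ℝ → ℝ) : E.N (f - g) = E.N (g - f) := by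
  rw [← neg_sub, norm_neg]

lemma norm_sub_le (f g h : ℝ → ℝ) : E.N (f - h) ≤ E.N (f - g) + E.N (g - h) := by
  simpa using E.norm_add_le (f - g) (g - h)

lemma norm_le_add_norm_sub (f g : ℝ → ℝ) : E.N f ≤ E.N g + E.N (f - g) := by
  simpa using E.norm_add_le g (f - g)

lemma ideal_of_le (hf : AEMeasurable f (muI α)) (hg : E.Mem g) (hf0 : ∀ t, 0 ≤ f t)
    (hfg : ∀ t, f t ≤ g t) : E.Mem f ∧ E.N f ≤ E.N g :=
  E.ideal hf hg (.of_forall fun t => abs_le_abs_of_nonneg (hf0 t) (hfg t))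

lemma tendsto_norm_of_monotone (hf : E.Mem f) (M : ℕ → ℝ → ℝ)
    (hM_meas : ∀ k, AEMeasurable (M k) (muI α)) (hM0 : ∀ k t, 0 ≤ M k t)
    (hM_le : ∀ k t, M k t ≤ f t) (hM_mono : Monotone M)
    (hM_lim : ∀ᵐ t ∂(muI α), Tendsto (fun k => M k t) atTop (𝓝 (f t))) :
    Tendsto (fun k => E.N (M k)) atTop (𝓝 (E.N f)) :=
  (E.fatou M f (fun k => (E.ideal_of_le (hM_meas k) hf (hM0 k) (hM_le k)).1)
    (E.mem_aemeasurable hf) (fun k => .of_forall (hM0 k)) (fun k => .of_forall (hM_mono k.le_succ))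
    hM_lim ⟨_, fun k => (E.ideal_of_le (hM_meas k) hf (hM0 k) (hM_le k)).2⟩).2

lemma tendsto_norm_of_norm_sub_le {f g : ℕ → ℝ → ℝ} {c : ℕ → ℝ} {L : ℝ}
    (hf : Tendsto (fun k => E.N (f k)) atTop (𝓝 L)) (hc : Tendsto c atTop (𝓝 0))
    (hgf : ∀ k, E.N (g k - f k) ≤ c k) : Tendsto (fun k => E.N (g k)) atTop (𝓝 L) := by
  refine tendsto_of_tendsto_of_tendsto_of_le_of_le (by simpa using hf.sub hc)
    (by simpa using hf.add hc) (fun k => ?_) (fun k => ?_)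
  · linarith [E.norm_le_add_norm_sub (f k) (g k), E.norm_sub_comm (f k) (g k), hgf k]
  · linarith [E.norm_le_add_norm_sub (g k) (f k), hgf k]

lemma norm_congr_ae (hf : AEMeasurable f (muI α)) (hg : E.Mem g) (h : f =ᵐ[muI α] g) :
    E.Mem f ∧ E.N f = E.N g := by
  have hfg := E.ideal hf hg (h.mono fun s hs => (congrArg abs hs).le)
  exact ⟨hfg.1, hfg.2.antisymm (E.ideal (E.mem_aemeasurable hg) hfg.1
    (h.mono fun s hs => (congrArg abs hs).ge)).2⟩

lemma exists_distr_ne_top (hx : E.Mem x) : ∃ lam, distr α x lam ≠ ∞ := by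
  -- otherwise `2 • x` and `x` are equimeasurable, so `‖x‖ = 2 ‖x‖`
  by_contra! htop
  have hdistr : distr α ((2 : ℝ) • x) = distr α x := by
    funext lam
    rw [distr_smul two_pos, htop, htop]
  have hnorm := E.norm_smul' 2 x
  rw [(E.symmetric ((E.mem_aemeasurable hx).const_smul 2) hx hdistr).2, abs_two] at hnorm
  have hx0 : ∀ᵐ s ∂(muI α), x s = 0 := (E.norm_eq_zero_iff hx).mp (by linarith)
  refine ENNReal.top_ne_zero ((htop 0).symm.trans (measure_mono_null (fun s hs => ?_)
    (ae_iff.mp hx0)))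
  exact fun h => by simp [h] at hs

lemma rearrFinite (hx : E.Mem x) : RearrFinite α x :=
  rearrFinite_of_tendsto (tendsto_distr_atTop (E.mem_aemeasurable hx) (E.exists_distr_ne_top hx))

lemma mem_rearr (hx : E.Mem x) : E.Mem (rearr α x) ∧ E.N (rearr α x) = E.N x :=
  E.symmetric (measurable_rearr (E.rearrFinite hx)).aemeasurable hx (distr_rearr (E.rearrFinite hx))

end SymmetricBFS

section

variable {α : ℝ≥0∞} {w x : ℝ → ℝ}

/-- Where `x*` is not integrable near `0`, `maxf` takes the junk value `0`; the floor
`θ x* ≤ w*` makes the same happen for `w`. -/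
lemma hlp_of_rearr_le (hw : RearrFinite α w) (hx : RearrFinite α x)
    (hle : ∀ t, 0 < t → rearr α w t ≤ rearr α x t) {θ : ℝ} (hθ : 0 < θ)
    (hlow : ∀ t, 0 < t → θ * rearr α x t ≤ rearr α w t) : HLP α w x := by
  intro t ht
  have hnorm : ∀ f : ℝ → ℝ, ∀ s, ‖rearr α f s‖ = rearr α f s :=
    fun f s => Real.norm_of_nonneg (rearr_nonneg f s)
  by_cases hint : IntegrableOn (rearr α x) (Ioc 0 t)
  · have hintw : IntegrableOn (rearr α w) (Ioc 0 t) :=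
      hint.mono' (measurable_rearr hw).aestronglyMeasurable
        (ae_restrict_of_forall_mem measurableSet_Ioc fun s hs => (hnorm w s).trans_le (hle s hs.1))
    exact div_le_div_of_nonneg_right
      (setIntegral_mono_on hintw hint measurableSet_Ioc fun s hs => hle s hs.1) ht.le
  · have hintw : ¬IntegrableOn (rearr α w) (Ioc 0 t) := fun hintw => hint <|
      (hintw.const_mul θ⁻¹).mono' (measurable_rearr hx).aestronglyMeasurable
        (ae_restrict_of_forall_mem measurableSet_Ioc fun s hs => by
          rw [hnorm, le_inv_mul_iff₀ hθ]
          exact hlow s hs.1)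
    simp only [maxf, integral_undef hint, integral_undef hintw, le_refl]

end

namespace SymmetricBFS.IsLLUKMPoint

variable {α : ℝ≥0∞} {E : SymmetricBFS α} {x : ℝ → ℝ}

lemma tendsto_norm_sub_rearr_of_antitoneOn (hLL : E.IsLLUKMPoint x) (hx : E.Mem x)
    (w : ℕ → ℝ → ℝ) {θ : ℕ → ℝ} (hθ : ∀ k, 0 < θ k) (hw_meas : ∀ k, Measurable (w k))
    (hw_anti : ∀ k, AntitoneOn (w k) (Ioi 0)) (hw_low : ∀ k t, θ k * rearr α x t ≤ w k t)
    (hw_le : ∀ k t, w k t ≤ rearr α x t)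
    (hw_norm : Tendsto (fun k => E.N (w k)) atTop (𝓝 (E.N x))) :
    Tendsto (fun k => E.N (w k - rearr α x)) atTop (𝓝 0) := by
  have hxf := E.rearrFinite hx
  have hxr := E.mem_rearr hx
  have hw0 : ∀ k t, 0 ≤ w k t := fun k t =>
    (mul_nonneg (hθ k).le (rearr_nonneg x t)).trans (hw_low k t)
  have hwmem : ∀ k, E.Mem (w k) := fun k =>
    (E.ideal_of_le (hw_meas k).aemeasurable hxr.1 (hw0 k) (hw_le k)).1
  have hwf : ∀ k, RearrFinite α (w k) := fun k => E.rearrFinite (hwmem k)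
  have hHLP : ∀ k, HLP α (w k) x := by
    refine fun k => hlp_of_rearr_le (hwf k) hxf (fun t ht => ?_) (hθ k) (fun t ht => ?_)
    · refine rearr_le_rearr_of_distr_le (fun lam _ => ?_) hxf ht
      rw [← distr_rearr hxf]
      exact distr_mono_of_ae_abs_le
        (.of_forall fun t => abs_le_abs_of_nonneg (hw0 k t) (hw_le k t)) lam
    · rw [← rearr_rearr hxf, ← rearr_smul (hθ k)]
      refine rearr_le_rearr_of_distr_le (fun lam _ => distr_mono_of_ae_abs_le
        (.of_forall fun s => ?_) lam) (hwf k) ht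
      exact abs_le_abs_of_nonneg (mul_nonneg (hθ k).le (rearr_nonneg x s)) (hw_low k s)
  refine (hLL w hwmem hHLP hw_norm).congr fun k => ?_
  refine (E.norm_congr_ae ((hw_meas k).sub (measurable_rearr hxf)).aemeasurable
    (E.mem_sub (E.mem_rearr (hwmem k)).1 hxr.1) ?_).2.symm
  filter_upwards [rearr_ae_eq_of_antitoneOn (hwf k) (hw0 k) (hw_anti k)] with t ht
  simp [ht]

/-- Applied to `W k = (1 - θ k) M k + θ k x*`: the floor `θ k x*` is what `hlp_of_rearr_le`
needs, and `θ k → 0` keeps `W k` close to `M k`, whose norms converge by the Fatou property. -/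
lemma tendsto_norm_rearr_sub (hLL : E.IsLLUKMPoint x) (hx : E.Mem x) (M : ℕ → ℝ → ℝ)
    (hM_meas : ∀ k, Measurable (M k)) (hM0 : ∀ k t, 0 ≤ M k t)
    (hM_le : ∀ k t, M k t ≤ rearr α x t) (hM_anti : ∀ k, AntitoneOn (M k) (Ioi 0))
    (hM_mono : Monotone M)
    (hM_lim : ∀ t, 0 < t → Tendsto (fun k => M k t) atTop (𝓝 (rearr α x t))) :
    Tendsto (fun k => E.N (rearr α x - M k)) atTop (𝓝 0) := by
  have hxf := E.rearrFinite hx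
  have hxr := E.mem_rearr hx
  set θ : ℕ → ℝ := fun k => 1 / ((k : ℝ) + 1)
  have hθ : ∀ k, 0 < θ k := fun k => Nat.one_div_pos_of_nat
  have hθ1 : ∀ k, θ k ≤ 1 := fun k => div_le_one_of_le₀ (by simp) (by positivity)
  have hθx_lim : Tendsto (fun k => θ k * E.N x) atTop (𝓝 0) := by
    have hθ_lim : Tendsto θ atTop (𝓝 0) := tendsto_one_div_add_atTop_nhds_zero_nat
    simpa using hθ_lim.mul_const (E.N x)
  set W : ℕ → ℝ → ℝ := fun k t => (1 - θ k) * M k t + θ k * rearr α x t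
  have hWM : ∀ k, E.N (W k - M k) ≤ θ k * E.N x := by
    intro k
    have hdiff : W k - M k = θ k • (rearr α x - M k) := by
      funext t
      simp only [W, Pi.sub_apply, Pi.smul_apply, smul_eq_mul]
      ring
    rw [hdiff, E.norm_smul', abs_of_pos (hθ k), ← hxr.2]
    exact mul_le_mul_of_nonneg_left (E.ideal_of_le
      ((measurable_rearr hxf).sub (hM_meas k)).aemeasurable hxr.1
      (fun t => sub_nonneg.mpr (hM_le k t)) (fun t => sub_le_self _ (hM0 k t))).2 (hθ k).le
  have hM_norm := E.tendsto_norm_of_monotone hxr.1 M (fun k => (hM_meas k).aemeasurable) hM0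
    hM_le hM_mono (ae_muI_pos.mono hM_lim)
  rw [hxr.2] at hM_norm
  have hWx := hLL.tendsto_norm_sub_rearr_of_antitoneOn hx W hθ
    (fun k => ((hM_meas k).const_mul _).add ((measurable_rearr hxf).const_mul _))
    (fun k a ha b hb hab => add_le_add
      (mul_le_mul_of_nonneg_left (hM_anti k ha hb hab) (sub_nonneg.mpr (hθ1 k)))
      (mul_le_mul_of_nonneg_left (rearr_antitoneOn hxf ha hb hab) (hθ k).le))
    (fun k t => le_add_of_nonneg_left (mul_nonneg (sub_nonneg.mpr (hθ1 k)) (hM0 k t)))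
    (fun k t => by nlinarith [hM_le k t, hθ1 k, hθ k])
    (E.tendsto_norm_of_norm_sub_le hM_norm hθx_lim hWM)
  refine squeeze_zero (fun k => E.norm_nonneg' _) (fun k => ?_)
    (by simpa using hWx.add hθx_lim)
  linarith [E.norm_sub_le (rearr α x) (W k) (M k), E.norm_sub_comm (rearr α x) (W k), hWM k]

end SymmetricBFS.IsLLUKMPoint

lemma tendsto_nhdsGT_zero_of_monotoneOn {f : ℝ → ℝ} (hf : MonotoneOn f (Ioi 0))
    (hf0 : ∀ t, 0 < t → 0 ≤ f t) (h : Tendsto (fun k : ℕ => f (1 / ((k : ℝ) + 1))) atTop (𝓝 0)) :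
    Tendsto f (𝓝[>] 0) (𝓝 0) := by
  refine tendsto_order.2 ⟨fun a ha => ?_, fun b hb => ?_⟩
  · filter_upwards [self_mem_nhdsWithin] with t ht using ha.trans_le (hf0 t ht)
  · obtain ⟨k, hk⟩ := (h.eventually (gt_mem_nhds hb)).exists
    filter_upwards [Ioo_mem_nhdsGT Nat.one_div_pos_of_nat] with t ht
    exact (hf ht.1 (mem_Ioi.mpr (by positivity)) ht.2.le).trans_lt hk

namespace SymmetricBFS.IsLLUKMPoint

variable {α : ℝ≥0∞} {E : SymmetricBFS α} {x : ℝ → ℝ}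

lemma tendsto_norm_rearr_sub_min (hLL : E.IsLLUKMPoint x) (hx : E.Mem x) :
    Tendsto (fun a => E.N (rearr α x - fun t => min (rearr α x t) (rearr α x a)))
      (𝓝[>] 0) (𝓝 0) := by
  have hxf := E.rearrFinite hx
  have hxr := E.mem_rearr hx
  have hmeas : ∀ c : ℝ, Measurable (rearr α x - fun t => min (rearr α x t) c) := fun c =>
    (measurable_rearr hxf).sub ((measurable_rearr hxf).min measurable_const)
  have h0 : ∀ c t, 0 ≤ (rearr α x - fun t => min (rearr α x t) c) t := fun c t =>
    sub_nonneg.mpr (min_le_left _ _)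
  refine tendsto_nhdsGT_zero_of_monotoneOn (fun a ha b hb hab => ?_)
    (fun a _ => E.norm_nonneg' _) ?_
  · refine (E.ideal_of_le (hmeas _).aemeasurable (E.ideal_of_le (hmeas _).aemeasurable hxr.1
      (h0 _) fun t => sub_le_self _ (le_min (rearr_nonneg x t) (rearr_nonneg x b))).1
      (h0 _) fun t => ?_).2
    exact sub_le_sub_left (min_le_min_left _ (rearr_antitoneOn hxf ha hb hab)) _
  refine hLL.tendsto_norm_rearr_sub hx _ (fun k => (measurable_rearr hxf).min measurable_const)
    (fun k t => le_min (rearr_nonneg x t) (rearr_nonneg x _)) (fun k t => min_le_left _ _)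
    (fun k a ha b hb hab => min_le_min_right _ (rearr_antitoneOn hxf ha hb hab))
    (fun k l hkl t => min_le_min_left _ (rearr_antitoneOn hxf (mem_Ioi.mpr (by positivity))
      (mem_Ioi.mpr (by positivity)) (Nat.one_div_le_one_div hkl))) fun t ht => ?_
  obtain ⟨k₀, hk₀⟩ := exists_nat_one_div_lt ht
  refine tendsto_const_nhds.congr' ?_
  filter_upwards [eventually_ge_atTop k₀] with k hk
  exact (min_eq_left (rearr_antitoneOn hxf (mem_Ioi.mpr (by positivity)) ht
    ((Nat.one_div_le_one_div hk).trans hk₀.le))).symm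

lemma tendsto_norm_min_rearr (hLL : E.IsLLUKMPoint x) (hx : E.Mem x) :
    Tendsto (fun η => E.N fun t => min (rearr α x t) η) (𝓝[>] 0) (𝓝 0) := by
  have hxf := E.rearrFinite hx
  have hxr := E.mem_rearr hx
  have hmeas : ∀ c : ℝ, Measurable fun t => min (rearr α x t) c := fun c =>
    (measurable_rearr hxf).min measurable_const
  refine tendsto_nhdsGT_zero_of_monotoneOn (fun a ha b hb hab => ?_)
    (fun a _ => E.norm_nonneg' _) ?_
  · exact (E.ideal_of_le (hmeas a).aemeasurable (E.ideal_of_le (hmeas b).aemeasurable hxr.1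
      (fun t => le_min (rearr_nonneg x t) (le_of_lt hb)) fun t => min_le_left _ _).1
      (fun t => le_min (rearr_nonneg x t) (le_of_lt ha)) fun t => min_le_min_left _ hab).2
  have hsub : ∀ k : ℕ, (fun t => min (rearr α x t) (1 / ((k : ℝ) + 1))) =
      rearr α x - fun t => max (rearr α x t - 1 / ((k : ℝ) + 1)) 0 := by
    intro k
    funext t
    simp only [Pi.sub_apply]
    rcases le_total (rearr α x t) (1 / ((k : ℝ) + 1)) with h | h
    · rw [min_eq_left h, max_eq_right (sub_nonpos.mpr h), sub_zero]
    · rw [min_eq_right h, max_eq_left (sub_nonneg.mpr h), sub_sub_cancel]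
  simp only [hsub]
  refine hLL.tendsto_norm_rearr_sub hx _
    (fun k => ((measurable_rearr hxf).sub measurable_const).max measurable_const)
    (fun k t => le_max_right _ _)
    (fun k t => max_le (by linarith [Nat.one_div_pos_of_nat (α := ℝ) (n := k)]) (rearr_nonneg x t))
    (fun k a ha b hb hab => max_le_max_right _ (sub_le_sub_right (rearr_antitoneOn hxf ha hb hab) _))
    (fun k l hkl t => max_le_max_right _ (sub_le_sub_left (Nat.one_div_le_one_div hkl) _))
    fun t _ => ?_
  have := ((tendsto_const_nhds (x := rearr α x t)).sub
    tendsto_one_div_add_atTop_nhds_zero_nat).max (tendsto_const_nhds (x := (0 : ℝ)))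
  rwa [sub_zero, max_eq_left (rearr_nonneg x t)] at this

end SymmetricBFS.IsLLUKMPoint

namespace SymmetricBFS.IsLLUKMPoint

variable {α : ℝ≥0∞} {E : SymmetricBFS α} {x : ℝ → ℝ}

lemma tendsto_norm_rearr_sub_indicator (hLL : E.IsLLUKMPoint x) (hx : E.Mem x) :
    Tendsto (fun k : ℕ => E.N (rearr α x - (Ioo 0 ((k : ℝ) + 1)).indicator (rearr α x)))
      atTop (𝓝 0) := by
  have hxf := E.rearrFinite hx
  have hnonneg : ∀ {S : Set ℝ}, ∀ s ∈ S, 0 ≤ rearr α x s := fun s _ => rearr_nonneg x s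
  refine hLL.tendsto_norm_rearr_sub hx _
    (fun k => (measurable_rearr hxf).indicator measurableSet_Ioo)
    (fun k => indicator_nonneg hnonneg) (fun k => indicator_le_self' hnonneg)
    (fun k a ha b hb hab => ?_) (fun k l hkl => ?_) fun t ht => ?_
  · by_cases hbk : b ∈ Ioo (0 : ℝ) ((k : ℝ) + 1)
    · rw [indicator_of_mem hbk, indicator_of_mem (show a ∈ Ioo (0 : ℝ) ((k : ℝ) + 1) from
        ⟨ha, hab.trans_lt hbk.2⟩)]
      exact rearr_antitoneOn hxf ha hb hab
    · rw [indicator_of_notMem hbk]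
      exact indicator_nonneg hnonneg a
  · exact indicator_le_indicator_of_subset (Ioo_subset_Ioo_right (by gcongr)) (rearr_nonneg x)
  · obtain ⟨k₀, hk₀⟩ := exists_nat_gt t
    refine tendsto_const_nhds.congr' ?_
    filter_upwards [eventually_ge_atTop k₀] with k hk
    have : t < (k : ℝ) + 1 := by linarith [(Nat.cast_le (α := ℝ)).mpr hk]
    exact (indicator_of_mem (show t ∈ Ioo (0 : ℝ) ((k : ℝ) + 1) from ⟨ht, this⟩) _).symm

/-- When `α = ∞` and `d_x(η) = ∞`, the tails of `x*` dominate the translates `η χ_[k+1,∞)`,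
whose norms do not depend on `k`. -/
lemma distr_lt_top (hLL : E.IsLLUKMPoint x) (hx : E.Mem x) {η : ℝ} (hη : 0 < η) :
    distr α x η < ∞ := by
  rcases ne_or_eq α ∞ with hα | hα
  · exact (distr_le_muI_univ x η).trans_lt hα.lt_top
  by_contra! hinf
  have hxf := E.rearrFinite hx
  have hxr := E.mem_rearr hx
  set D : ℕ → ℝ → ℝ := fun k => rearr α x - (Ioo 0 ((k : ℝ) + 1)).indicator (rearr α x)
  have hD_mem : ∀ k, E.Mem (D k) := fun k => E.mem_sub hxr.1
    (E.ideal_of_le ((measurable_rearr hxf).indicator measurableSet_Ioo).aemeasurable hxr.1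
      (indicator_nonneg fun s _ => rearr_nonneg x s)
      (indicator_le_self' fun s _ => rearr_nonneg x s)).1
  set χ : ℕ → ℝ → ℝ := fun k => (Ici ((k : ℝ) + 1)).indicator fun _ => η
  have hχ_le : ∀ k t, χ k t ≤ D k t := by
    intro k t
    by_cases ht : t ∈ Ici ((k : ℝ) + 1)
    · have ht0 : 0 < t := lt_of_lt_of_le (by positivity) ht
      have hnot : t ∉ Ioo 0 ((k : ℝ) + 1) := fun h => (not_lt.mpr (mem_Ici.mp ht)) h.2
      simpa [χ, D, indicator_of_mem ht, indicator_of_notMem hnot]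
        using le_rearr_of_distr_eq_top hxf (top_unique hinf) ht0
    · simpa [χ, D, indicator_of_notMem ht] using
        indicator_le_self' (fun s _ => rearr_nonneg x s) t
  have hχ : ∀ k, E.Mem (χ k) ∧ E.N (χ k) ≤ E.N (D k) := fun k =>
    E.ideal_of_le (measurable_const.indicator measurableSet_Ici).aemeasurable (hD_mem k)
      (indicator_nonneg fun _ _ => hη.le) (hχ_le k)
  have hχ_norm : ∀ k, E.N (χ 0) ≤ E.N (D k) := fun k =>
    (E.symmetric (measurable_const.indicator measurableSet_Ici).aemeasurable (hχ k).1
      (distr_indicator_const (by rw [muI_Ici_of_eq_top hα, muI_Ici_of_eq_top hα]) η)).2.trans_le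
      (hχ k).2
  have hχ_zero : E.N (χ 0) = 0 := le_antisymm
    (ge_of_tendsto' (hLL.tendsto_norm_rearr_sub_indicator hx) hχ_norm) (E.norm_nonneg' _)
  have hnull := ae_iff.mp ((E.norm_eq_zero_iff (hχ 0).1).mp hχ_zero)
  refine ENNReal.top_ne_zero ((muI_Ici_of_eq_top hα ((0 : ℕ) + 1 : ℝ)).symm.trans ?_)
  refine measure_mono_null (fun t ht => ?_) hnull
  simp only [mem_ofPred_eq, χ, indicator_of_mem ht]
  exact hη.ne'

end SymmetricBFS.IsLLUKMPoint

lemma tendsto_measure_setOf_lt_of_tendsto_ae {Ω : Type*} [MeasurableSpace Ω] {μ : Measure Ω}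
    {u : ℕ → Ω → ℝ} {g : Ω → ℝ} {η : ℝ} (hη : 0 < η) (hu : ∀ n, AEMeasurable (u n) μ)
    (hug : ∀ n, ∀ᵐ s ∂μ, u n s ≤ g s) (hlim : ∀ᵐ s ∂μ, Tendsto (fun n => u n s) atTop (𝓝 0))
    (hg : μ {s | η < g s} ≠ ∞) : Tendsto (fun n => μ {s | η < u n s}) atTop (𝓝 0) := by
  have : IsFiniteMeasure (μ.restrict {s | η < g s}) := isFiniteMeasure_restrict.mpr hg
  have hconv := tendstoInMeasure_iff_dist.mp (tendstoInMeasure_of_tendsto_ae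
    (μ := μ.restrict {s | η < g s})
    (fun n => (hu n).aestronglyMeasurable.restrict) (ae_restrict_of_ae hlim)) η hη
  refine tendsto_of_tendsto_of_tendsto_of_le_of_le tendsto_const_nhds hconv (fun n => zero_le)
    fun n => (measure_mono_ae ?_).trans (Measure.le_restrict_apply _ _)
  filter_upwards [hug n] with s hs hlt
  have hlt : η < u n s := hlt
  exact ⟨show η ≤ dist (u n s) 0 by rw [Real.dist_eq, sub_zero]; exact hlt.le.trans (le_abs_self _),
    hlt.trans_le hs⟩

namespace SymmetricBFS

variable {α : ℝ≥0∞} (E : SymmetricBFS α) {x y u : ℝ → ℝ}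

/-- `y* ≤ (x* - min(x*, x*(a))) + x*(a) χ_(0,a)`, as `y*` vanishes beyond `a`. -/
lemma norm_le_of_distr_le (hx : E.Mem x) (hy : E.Mem y)
    (hyx : ∀ lam, 0 < lam → distr α y lam ≤ distr α x lam) {a : ℝ} (ha : 0 < a)
    (hya : distr α y 0 ≤ ENNReal.ofReal a) :
    E.N y ≤ E.N (rearr α x - fun t => min (rearr α x t) (rearr α x a)) + rearr α x a * E.fund a := by
  have hxf := E.rearrFinite hx
  have hxr := E.mem_rearr hx
  set P := rearr α x - fun t => min (rearr α x t) (rearr α x a)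
  set Q := rearr α x a • (Ioo 0 a).indicator fun _ => (1 : ℝ)
  have hP0 : ∀ t, 0 ≤ P t := fun t => sub_nonneg.mpr (min_le_left _ _)
  have hQ0 : ∀ t, 0 ≤ Q t := fun t =>
    mul_nonneg (rearr_nonneg x a) (indicator_nonneg (fun _ _ => zero_le_one) t)
  have hPmem : E.Mem P := (E.ideal_of_le
    ((measurable_rearr hxf).sub ((measurable_rearr hxf).min measurable_const)).aemeasurable hxr.1
    hP0 fun t => sub_le_self _ (le_min (rearr_nonneg x t) (rearr_nonneg x a))).1
  have hQmem : E.Mem Q := by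
    refine (E.ideal_of_le ((measurable_const.indicator measurableSet_Ioo).const_smul _).aemeasurable
      hxr.1 hQ0 fun t => ?_).1
    by_cases ht : t ∈ Ioo 0 a
    · simpa [Q, indicator_of_mem ht] using rearr_antitoneOn hxf ht.1 ha ht.2.le
    · simpa [Q, indicator_of_notMem ht] using rearr_nonneg x t
  have hyPQ : ∀ t, 0 < t → rearr α y t ≤ P t + Q t := by
    intro t ht
    rcases lt_or_ge t a with hta | hta
    · have hyx_t := rearr_le_rearr_of_distr_le hyx hxf ht
      simp only [P, Q, Pi.sub_apply, Pi.smul_apply, smul_eq_mul, indicator_of_mem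
        (show t ∈ Ioo 0 a from ⟨ht, hta⟩), mul_one]
      linarith [min_le_right (rearr α x t) (rearr α x a)]
    · exact (rearr_le_of_distr_le le_rfl (hya.trans (ENNReal.ofReal_le_ofReal hta))).trans
        (add_nonneg (hP0 t) (hQ0 t))
  calc E.N y = E.N (rearr α y) := (E.mem_rearr hy).2.symm
    _ ≤ E.N (P + Q) := (E.ideal (measurable_rearr (E.rearrFinite hy)).aemeasurable
        (E.add_mem hPmem hQmem) (ae_muI_pos.mono fun t ht =>
          abs_le_abs_of_nonneg (rearr_nonneg y t) (hyPQ t ht))).2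
    _ ≤ E.N P + E.N Q := E.norm_add_le P Q
    _ = E.N P + rearr α x a * E.fund a := by
        rw [E.norm_smul', abs_of_nonneg (rearr_nonneg x a)]
        rfl

/-- Split `u = min(u, η) + (u - η)⁺`. -/
lemma norm_le_of_le_abs_of_measure_le (hx : E.Mem x) (hu : E.Mem u)
    (hux : ∀ᵐ s ∂(muI α), 0 ≤ u s ∧ u s ≤ |x s|) {η a : ℝ} (hη : 0 ≤ η) (ha : 0 < a)
    (hua : muI α {s | η < u s} ≤ ENNReal.ofReal a) :
    E.N u ≤ E.N (fun t => min (rearr α x t) η) +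
      (E.N (rearr α x - fun t => min (rearr α x t) (rearr α x a)) + rearr α x a * E.fund a) := by
  have hxf := E.rearrFinite hx
  have hxm := E.mem_aemeasurable hx
  have hum := E.mem_aemeasurable hu
  have hsplit : u = (fun s => min (u s) η) + fun s => max (u s - η) 0 := by
    funext s
    rcases le_total (u s) η with h | h
    · simp [h]
    · simp [h]
  have hmin_mem : E.Mem fun t => min (rearr α x t) η :=
    (E.ideal_of_le ((measurable_rearr hxf).min measurable_const).aemeasurable (E.mem_rearr hx).1
      (fun t => le_min (rearr_nonneg x t) hη) fun t => min_le_left _ _).1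
  have hmin_abs := E.symmetric (hxm.abs.min aemeasurable_const) hmin_mem
    (distr_min_congr (fun s => abs_nonneg (x s)) (rearr_nonneg x)
      ((distr_abs x).trans (distr_rearr hxf).symm) hη)
  have hmin : E.N (fun s => min (u s) η) ≤ E.N fun t => min (rearr α x t) η := by
    rw [← hmin_abs.2]
    exact (E.ideal (hum.min aemeasurable_const) hmin_abs.1 (hux.mono fun s hs =>
      abs_le_abs_of_nonneg (le_min hs.1 hη) (min_le_min_right η hs.2))).2
  have hpos_le : ∀ᵐ s ∂(muI α), |max (u s - η) 0| ≤ |x s| := hux.mono fun s hs =>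
    (abs_of_nonneg (le_max_right _ _)).trans_le (max_le (by linarith [hs.2]) (abs_nonneg _))
  have hpos_mem := E.ideal ((hum.sub aemeasurable_const).max aemeasurable_const) hx hpos_le
  have hsupp : distr α (fun s => max (u s - η) 0) 0 ≤ ENNReal.ofReal a := by
    refine (measure_mono fun s (hs : 0 < |max (u s - η) 0|) => ?_).trans hua
    rw [abs_of_nonneg (le_max_right _ _), lt_max_iff] at hs
    exact sub_pos.mp (hs.resolve_right (lt_irrefl 0))
  calc E.N u = E.N ((fun s => min (u s) η) + fun s => max (u s - η) 0) := congrArg E.N hsplit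
    _ ≤ _ := E.norm_add_le _ _
    _ ≤ _ := add_le_add hmin (E.norm_le_of_distr_le hx hpos_mem.1
        (fun lam _ => distr_mono_of_ae_abs_le hpos_le lam) ha hsupp)

end SymmetricBFS

theorem llukm_point_is_oc_point_general (α : ℝ≥0∞)
    (E : SymmetricBFS α) (x : ℝ → ℝ) (hx : E.Mem x)
    (hLLUKM : E.IsLLUKMPoint x)
    (hphi : Tendsto (fun t => rearr α x t * E.fund t) (𝓝[>] (0 : ℝ)) (𝓝 0)) :
    E.IsOCPoint x := by
  intro u hu hux hlim
  refine tendsto_order.2 ⟨fun c hc => .of_forall fun n => hc.trans_le (E.norm_nonneg' _),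
    fun ε hε => ?_⟩
  obtain ⟨η, hηε, hη⟩ := (((hLLUKM.tendsto_norm_min_rearr hx).eventually
    (gt_mem_nhds (by positivity : 0 < ε / 2))).and self_mem_nhdsWithin).exists
  obtain ⟨a, haε, ha⟩ := ((((hLLUKM.tendsto_norm_rearr_sub_min hx).add hphi).eventually
    (gt_mem_nhds (show (0 : ℝ) + 0 < ε / 2 by linarith))).and self_mem_nhdsWithin).exists
  have hsmall := tendsto_measure_setOf_lt_of_tendsto_ae hη
    (fun n => E.mem_aemeasurable (hu n)) (fun n => (hux n).mono fun s hs => hs.2) hlim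
    (hLLUKM.distr_lt_top hx hη).ne
  filter_upwards [hsmall.eventually (ge_mem_nhds (ENNReal.ofReal_pos.mpr ha))] with n hn
  linarith [E.norm_le_of_le_abs_of_measure_le hx (hu n) (hux n) (le_of_lt hη) ha hn]

/-- If `x ∈ E` is an `LLUKM` point and `x*(t)·φ(t) → 0` as `t → 0⁺`, then
`x` is a point of order continuity. -/
theorem llukm_point_is_oc_point (α : ℝ≥0∞) (hα : α = 1 ∨ α = ∞)
    (E : SymmetricBFS α) (x : ℝ → ℝ) (hx : E.Mem x)
    (hLLUKM : E.IsLLUKMPoint x)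
    (hphi : Tendsto (fun t => rearr α x t * E.fund t) (𝓝[>] (0 : ℝ)) (𝓝 0)) :
    E.IsOCPoint x :=
  llukm_point_is_oc_point_general α E x hx hLLUKM hphi
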